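/- arXiv:2512.16358 — 4 statements merged into one kernel-verified Lean document; each statement's English description precedes it below -/
import Mathlib

section
/- For k ≥ 2, the quantity f_k satisfies the recurrence f_k = (p_k − 1) · f_{k−1}, where p_k is the k-th prime. -/
/-- `fdet k` is `(-1)^k` times the determinant of the `(k+1) × (k+1)` integer matrix whose
first row is all ones and whose row `i+1` (for `1 ≤ i ≤ k`) has the `i`-th prime in column
`i` and ones elsewhere (primes 0-indexed via `Nat.nth Nat.Prime`). -/
noncomputable def fdet (k : ℕ) : ℤ :=
  (-1 : ℤ) ^ k *
    (Matrix.of fun i j : Fin (k + 1) =>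
      if h : i = 0 then (1 : ℤ)
      else if (j : ℕ) = ((i.pred h : Fin k) : ℕ) then
        (Nat.nth Nat.Prime ((i.pred h : Fin k) : ℕ) : ℤ)
      else 1).det

lemma fdet_eq (k : ℕ) :
    fdet k = ∏ i ∈ Finset.range k, ((Nat.nth Nat.Prime i : ℤ) - 1) := by
  classical
  unfold fdet
  set B : Matrix (Fin (k + 1)) (Fin (k + 1)) ℤ := Matrix.of fun i j =>
    if h : i = 0 then (1 : ℤ)
    else if (j : ℕ) = ((i.pred h : Fin k) : ℕ) then
      (Nat.nth Nat.Prime ((i.pred h : Fin k) : ℕ) : ℤ) - 1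
    else 0 with hB
  have hdet : (Matrix.of fun i j : Fin (k + 1) =>
      if h : i = 0 then (1 : ℤ)
      else if (j : ℕ) = ((i.pred h : Fin k) : ℕ) then
        (Nat.nth Nat.Prime ((i.pred h : Fin k) : ℕ) : ℤ)
      else 1).det = B.det := by
    apply Matrix.det_eq_of_forall_row_eq_smul_add_const
      (c := fun i => if i = 0 then (0 : ℤ) else 1) (k := 0) (by simp)
    intro i j
    by_cases h : i = 0
    · simp [hB, h]
    · simp only [hB, Matrix.of_apply, dif_neg h, if_neg h, dif_pos rfl]
      split_ifs with hj <;> ring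
  rw [hdet]
  -- expand along the last column
  rcases k with _ | m
  · simp [hB]
  rw [Matrix.det_succ_column B (Fin.last (m + 1))]
  have hcol : ∀ i : Fin (m + 2), B i (Fin.last (m + 1)) =
      if i = 0 then 1 else 0 := by
    intro i
    by_cases h : i = 0
    · simp [hB, h]
    · have : ((Fin.last (m + 1) : Fin (m + 2)) : ℕ) ≠ ((i.pred h : Fin (m + 1)) : ℕ) := by
        have := (i.pred h).isLt
        simp only [Fin.val_last]
        omega
      simp only [hB, Matrix.of_apply, dif_neg h]
      rw [if_neg this, if_neg h]
  rw [Finset.sum_eq_single (0 : Fin (m + 2))]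
  · have hsub : B.submatrix (Fin.succAbove 0) (Fin.succAbove (Fin.last (m + 1))) =
        Matrix.diagonal (fun i : Fin (m + 1) => (Nat.nth Nat.Prime (i : ℕ) : ℤ) - 1) := by
      ext i j
      have h0 : (i.succ : Fin (m + 2)) ≠ 0 := Fin.succ_ne_zero i
      have hpred : (i.succ).pred h0 = i := by simp
      simp only [Matrix.submatrix_apply, Fin.succAbove_zero, Fin.succAbove_last, hB,
        Matrix.of_apply, dif_neg h0, hpred, Fin.coe_castSucc, Matrix.diagonal_apply]
      by_cases hji : (j : ℕ) = (i : ℕ)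
      · have : j = i := Fin.ext hji
        simp [this]
      · have : j ≠ i := fun h => hji (by rw [h])
        simp [hji, Ne.symm this]
    rw [hsub, Matrix.det_diagonal, hcol 0, if_pos rfl,
      Fin.prod_univ_eq_prod_range (fun i => (Nat.nth Nat.Prime i : ℤ) - 1)]
    have hpow : ((-1 : ℤ)) ^ (m + 1) * (-1) ^ ((0 : Fin (m + 2)) + (Fin.last (m + 1)) : ℕ) = 1 := by
      rw [← pow_add]
      exact Even.neg_one_pow ⟨m + 1, by simp [Fin.val_last]⟩
    calc (-1 : ℤ) ^ (m + 1) *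
          ((-1) ^ ((0 : Fin (m + 2)) + (Fin.last (m + 1)) : ℕ) * 1 *
            ∏ i ∈ Finset.range (m + 1), ((Nat.nth Nat.Prime i : ℤ) - 1))
        = ((-1 : ℤ) ^ (m + 1) * (-1) ^ ((0 : Fin (m + 2)) + (Fin.last (m + 1)) : ℕ)) *
            ∏ i ∈ Finset.range (m + 1), ((Nat.nth Nat.Prime i : ℤ) - 1) := by ring
      _ = ∏ i ∈ Finset.range (m + 1), ((Nat.nth Nat.Prime i : ℤ) - 1) := by rw [hpow, one_mul]
  · intro b _ hb
    rw [hcol, if_neg hb]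
    ring
  · intro h
    exact absurd (Finset.mem_univ _) h

/-- For `k ≥ 2`, `f_k = (p_k - 1) · f_{k-1}`, where `p_k` is the `k`-th prime
(so `p_k = Nat.nth Nat.Prime (k - 1)` in 0-indexed notation). -/
theorem f_recurrence (k : ℕ) (hk : 2 ≤ k) :
    fdet k = ((Nat.nth Nat.Prime (k - 1) : ℤ) - 1) * fdet (k - 1) := by
  obtain ⟨m, rfl⟩ : ∃ m, k = m + 1 := ⟨k - 1, by omega⟩
  simp only [Nat.add_sub_cancel, fdet_eq, Finset.prod_range_succ]
  ring
end

section
/- For k ≥ 2, the quantities a_k and f_k satisfy the recurrence a_k = f_{k−1} + (p_k − 1) · a_{k−1}, where p_k is the k-th prime. -/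
/-- `adet k` is the determinant of the `k × k` integer matrix with the first `k` primes on
the diagonal and ones elsewhere (primes 0-indexed via `Nat.nth Nat.Prime`). -/
noncomputable def adet (k : ℕ) : ℤ :=
  (Matrix.of fun i j : Fin k =>
    if i = j then (Nat.nth Nat.Prime i : ℤ) else 1).det

theorem key (n : ℕ) :
    adet (n + 1) = fdet n + ((Nat.nth Nat.Prime n : ℤ) - 1) * adet n := by
  classical
  set A : Matrix (Fin (n+1)) (Fin (n+1)) ℤ :=
    Matrix.of (fun i j : Fin (n+1) => if i = j then (Nat.nth Nat.Prime i : ℤ) else 1) with hA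
  set F : Matrix (Fin (n+1)) (Fin (n+1)) ℤ :=
    Matrix.of (fun i j : Fin (n+1) =>
      if h : i = 0 then (1 : ℤ)
      else if (j : ℕ) = ((i.pred h : Fin n) : ℕ) then
        (Nat.nth Nat.Prime ((i.pred h : Fin n) : ℕ) : ℤ)
      else 1) with hF
  have hrow : A (Fin.last n) =
      (fun _ => (1:ℤ)) + ((Nat.nth Nat.Prime n : ℤ) - 1) • Pi.single (Fin.last n) 1 := by
    funext j
    by_cases h : Fin.last n = j
    · subst h; simp [hA]
    · simp [hA, h, Pi.single_apply, Ne.symm h]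
  have h1 : adet (n+1) = (A.updateRow (Fin.last n)
      ((fun _ => (1:ℤ)) + ((Nat.nth Nat.Prime n : ℤ) - 1) • Pi.single (Fin.last n) 1)).det := by
    rw [← hrow, Matrix.updateRow_eq_self]; rfl
  rw [h1, Matrix.det_updateRow_add, Matrix.det_updateRow_smul]
  -- term 2: minor expansion
  have h2 : (A.updateRow (Fin.last n) (Pi.single (Fin.last n) 1)).det = adet n := by
    rw [Matrix.det_succ_row _ (Fin.last n)]
    rw [Finset.sum_eq_single (Fin.last n)]
    · have hsub : ((A.updateRow (Fin.last n) (Pi.single (Fin.last n) 1)).submatrix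
          (Fin.last n).succAbove (Fin.last n).succAbove) =
          Matrix.of (fun i j : Fin n => if i = j then (Nat.nth Nat.Prime i : ℤ) else 1) := by
        ext i j
        rw [Fin.succAbove_last]
        simp [Matrix.submatrix, Matrix.updateRow_ne (Fin.castSucc_lt_last i).ne, hA,
          Fin.castSucc_inj]
      rw [hsub]
      simp only [adet, Fin.val_last, ← pow_add]
      rw [show n + n = 2 * n by ring, pow_mul]
      norm_num
    · intro j _ hj
      simp [Matrix.updateRow_self, Pi.single_eq_of_ne hj]
    · simp
  -- term 1: cyclic permutation
  have hC : A.updateRow (Fin.last n) (fun _ => (1:ℤ)) = F.submatrix (finRotate (n+1)) id := by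
    ext i j
    refine Fin.lastCases ?_ ?_ i
    · simp [Matrix.updateRow_self, Matrix.submatrix, finRotate_succ_apply, hF]
    · intro i'
      rw [Matrix.updateRow_ne (Fin.castSucc_lt_last i').ne]
      simp only [Matrix.submatrix_apply, finRotate_succ_apply, id, Fin.coeSucc_eq_succ]
      have hne : (i'.succ : Fin (n+1)) ≠ 0 := Fin.succ_ne_zero i'
      simp [hF, hne, Fin.pred_succ, hA]
      by_cases h : i'.castSucc = j
      · subst h; simp
      · rw [if_neg h, if_neg]
        intro hc
        exact h (Fin.ext (by simpa using hc.symm))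
  have h3 : (A.updateRow (Fin.last n) (fun _ => (1:ℤ))).det = fdet n := by
    rw [hC, Matrix.det_permute, sign_finRotate, hF]
    unfold fdet
    push_cast
    ring
  rw [h2, h3]

/-- For `k ≥ 2`, `a_k = f_{k-1} + (p_k - 1) · a_{k-1}`, where `p_k` is the `k`-th prime. -/
theorem a_recurrence (k : ℕ) (hk : 2 ≤ k) :
    adet k = fdet (k - 1) + ((Nat.nth Nat.Prime (k - 1) : ℤ) - 1) * adet (k - 1) := by
  obtain ⟨n, rfl⟩ : ∃ n, k = n + 1 := ⟨k - 1, by omega⟩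
  simpa using key n
end

section
/- Let p_1, ..., p_k be the first k prime numbers with k ≥ 2, let P_j = ∏_{i=1}^j p_i, and choose a residue class r_i modulo p_i for each 1 ≤ i ≤ k. Let occ(j) denote the number of integers n with 1 ≤ n ≤ P_j such that n lies in at least two of the residue classes r_1 mod p_1, ..., r_j mod p_j, and let free(j) denote the number of integers n with 1 ≤ n ≤ P_j lying in none of these j residue classes. Then occ(k) = P_{k−1} + (p_k − 1) · occ(k−1) − free(k−1). -/
open Finset

/-- `P j` is the product of the first `j` primes (0-indexed via `Nat.nth Nat.Prime`). -/
noncomputable def primorial' (j : ℕ) : ℕ := ∏ i ∈ Finset.range j, Nat.nth Nat.Prime i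

/-- `gammaj k r j n` counts the indices `i < j` (among the first `k` primes) such that
`n ≡ r i (mod pᵢ)`. -/
noncomputable def gammaj (k : ℕ) (r : Fin k → ℕ) (j n : ℕ) : ℕ :=
  (Finset.univ.filter fun i : Fin k =>
    (i : ℕ) < j ∧ n % Nat.nth Nat.Prime i = r i % Nat.nth Nat.Prime i).card

/-- `occ k r j` counts the integers `1 ≤ n ≤ P j` lying in at least two of the first `j`
chosen residue classes. -/
noncomputable def occCount (k : ℕ) (r : Fin k → ℕ) (j : ℕ) : ℕ :=
  ((Finset.Icc 1 (primorial' j)).filter fun n => 2 ≤ gammaj k r j n).card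

/-- `free k r j` counts the integers `1 ≤ n ≤ P j` lying in none of the first `j`
chosen residue classes. -/
noncomputable def freeCount (k : ℕ) (r : Fin k → ℕ) (j : ℕ) : ℕ :=
  ((Finset.Icc 1 (primorial' j)).filter fun n => gammaj k r j n = 0).card

/- ### auxiliary lemmas -/

lemma gammaj_congr (k j : ℕ) (r : Fin k → ℕ) {m n : ℕ}
    (h : ∀ i : Fin k, (i : ℕ) < j →
      m % Nat.nth Nat.Prime i = n % Nat.nth Nat.Prime i) :
    gammaj k r j m = gammaj k r j n := by
  unfold gammaj
  congr 1
  apply Finset.filter_congr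
  intro i _
  exact and_congr_right fun h1 => by rw [h i h1]

lemma dvd_primorial' {k j : ℕ} (i : Fin k) (hi : (i : ℕ) < j) :
    Nat.nth Nat.Prime i ∣ primorial' j :=
  Finset.dvd_prod_of_mem _ (Finset.mem_range.mpr hi)

lemma gammaj_mod (k j : ℕ) (r : Fin k → ℕ) (n M : ℕ)
    (hM : ∀ i : Fin k, (i : ℕ) < j → Nat.nth Nat.Prime i ∣ M) :
    gammaj k r j (n % M) = gammaj k r j n :=
  gammaj_congr k j r fun i hi => Nat.mod_mod_of_dvd n (hM i hi)

lemma gammaj_add (k j : ℕ) (r : Fin k → ℕ) (n M : ℕ)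
    (hM : ∀ i : Fin k, (i : ℕ) < j → Nat.nth Nat.Prime i ∣ M) :
    gammaj k r j (n + M) = gammaj k r j n := by
  apply gammaj_congr
  intro i hi
  obtain ⟨c, rfl⟩ := hM i hi
  exact Nat.add_mul_mod_self_left n _ c

/-- periodic predicate count over `range (c*M)` -/
lemma cnt_mul (q : ℕ → Prop) [DecidablePred q] (M c : ℕ)
    (hq : ∀ n, q (n + M) ↔ q n) :
    ((Finset.range (c * M)).filter q).card = c * ((Finset.range M).filter q).card := by
  have hqq : ∀ c n, q (n + c * M) ↔ q n := by
    intro c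
    induction c with
    | zero => simp
    | succ c ihc =>
      intro n
      have : n + (c + 1) * M = (n + c * M) + M := by ring
      rw [this, hq, ihc]
  induction c with
  | zero => simp
  | succ c ih =>
    have hq' : ∀ n, q (n + c * M) ↔ q n := hqq c
    have hsplit : Finset.range ((c + 1) * M) =
        Finset.range (c * M) ∪ (Finset.range M).map (addLeftEmbedding (c * M)) := by
      rw [add_mul, one_mul, Finset.range_add_eq_union]
    rw [hsplit, Finset.filter_union, Finset.card_union_of_disjoint, ih,
      Finset.filter_map, Finset.card_map]
    · have : Finset.filter (q ∘ (addLeftEmbedding (c * M))) (Finset.range M)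
          = Finset.filter q (Finset.range M) := by
        apply Finset.filter_congr
        intro n _
        simp only [Function.comp, addLeftEmbedding_apply]
        rw [add_comm, hq' n]
      rw [this]; ring
    · exact Finset.disjoint_filter_filter (Finset.disjoint_left.mpr (by
        intro a ha hb
        simp only [Finset.mem_map, Finset.mem_range, addLeftEmbedding_apply] at ha hb
        obtain ⟨b, _, rfl⟩ := hb
        omega))

/-- converting `Icc 1 N` counts to `range N` counts, for predicates with `q N ↔ q 0`. -/
lemma cnt_Icc (q : ℕ → Prop) [DecidablePred q] (N : ℕ) (h0 : q N ↔ q 0) :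
    ((Finset.Icc 1 N).filter q).card = ((Finset.range N).filter q).card := by
  rcases Nat.eq_zero_or_pos N with rfl | hN
  · simp
  have h1 : Finset.Icc 1 N = insert N (Finset.Ico 1 N) := by
    rw [Finset.Ico_insert_right (by omega)]
  have h2 : Finset.range N = insert 0 (Finset.Ico 1 N) := by
    ext x; simp [Finset.mem_Ico, Finset.mem_range]; omega
  rw [h1, h2, Finset.filter_insert, Finset.filter_insert]
  have hNmem : N ∉ Finset.filter q (Finset.Ico 1 N) := by simp
  have h0mem : (0:ℕ) ∉ Finset.filter q (Finset.Ico 1 N) := by simp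
  by_cases hq : q 0
  · rw [if_pos (h0.mpr hq), if_pos hq, Finset.card_insert_of_notMem hNmem,
      Finset.card_insert_of_notMem h0mem]
  · rw [if_neg (fun h => hq (h0.mp h)), if_neg hq]

lemma crt_count (g : ℕ → ℕ) (M N s : ℕ) (hco : Nat.Coprime M N)
    (hM : 0 < M) (hN : 0 < N) (hs : s < N)
    (hg : ∀ n, g (n % M) = g n) :
    ((Finset.range (M * N)).filter fun n => g n = 1 ∧ n % N = s).card
      = ((Finset.range M).filter fun n => g n = 1).card := by
  apply Finset.card_bij (fun n _ => n % M)
  · intro n hn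
    simp only [Finset.mem_filter, Finset.mem_range] at hn ⊢
    exact ⟨Nat.mod_lt _ hM, by rw [hg]; exact hn.2.1⟩
  · intro a ha b hb hab
    simp only [Finset.mem_filter, Finset.mem_range] at ha hb
    have h1 : a ≡ b [MOD M] := by unfold Nat.ModEq; omega
    have h2 : a ≡ b [MOD N] := by unfold Nat.ModEq; omega
    have := (Nat.modEq_and_modEq_iff_modEq_mul hco).mp ⟨h1, h2⟩
    unfold Nat.ModEq at this
    rw [Nat.mod_eq_of_lt ha.1, Nat.mod_eq_of_lt hb.1] at this
    exact this
  · intro b hb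
    simp only [Finset.mem_filter, Finset.mem_range] at hb
    obtain ⟨z, hz1, hz2⟩ := Nat.chineseRemainder hco b s
    refine ⟨z % (M * N), ?_, ?_⟩
    · simp only [Finset.mem_filter, Finset.mem_range]
      have hMN : 0 < M * N := Nat.mul_pos hM hN
      have e1 : z % (M * N) % M = b := by
        rw [Nat.mod_mod_of_dvd _ ⟨N, rfl⟩]
        have := hz1; unfold Nat.ModEq at this
        rw [this, Nat.mod_eq_of_lt hb.1]
      have e2 : z % (M * N) % N = s := by
        rw [Nat.mod_mod_of_dvd _ ⟨M, Nat.mul_comm M N⟩]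
        have := hz2; unfold Nat.ModEq at this
        rw [this, Nat.mod_eq_of_lt hs]
      refine ⟨Nat.mod_lt _ hMN, ?_, e2⟩
      rw [← hg, e1, hb.2]
    · rw [Nat.mod_mod_of_dvd _ ⟨N, rfl⟩]
      have := hz1; unfold Nat.ModEq at this
      rw [this, Nat.mod_eq_of_lt hb.1]

/-- For `k ≥ 2` and any choice of residue classes for the first `k` primes,
`occ(k) = P_{k-1} + (p_k - 1) · occ(k-1) - free(k-1)`. -/
theorem occ_recurrence (k : ℕ) (hk : 2 ≤ k) (r : Fin k → ℕ) :
    (occCount k r k : ℤ) =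
      (primorial' (k - 1) : ℤ) +
        ((Nat.nth Nat.Prime (k - 1) : ℤ) - 1) * occCount k r (k - 1) -
        freeCount k r (k - 1) := by
  classical
  set j := k - 1 with hjdef
  have hjk : j < k := by omega
  set p := Nat.nth Nat.Prime j with hpdef
  set P := primorial' j with hPdef
  have hpprime : p.Prime := Nat.prime_nth_prime j
  have hppos : 0 < p := hpprime.pos
  have hPpos : 0 < P := Finset.prod_pos fun i _ => (Nat.prime_nth_prime i).pos
  have hPk : primorial' k = P * p := by
    have hkj : k = j + 1 := by omega
    rw [hkj, hPdef, hpdef, primorial', primorial', Finset.prod_range_succ]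
  -- divisibility facts
  have hdvdP : ∀ i : Fin k, (i : ℕ) < j → Nat.nth Nat.Prime i ∣ P :=
    fun i hi => dvd_primorial' i hi
  have hdvdPp : ∀ i : Fin k, (i : ℕ) < k → Nat.nth Nat.Prime i ∣ P * p := by
    intro i hi
    rcases lt_or_ge (i : ℕ) j with h | h
    · exact (hdvdP i h).mul_right p
    · have : (i : ℕ) = j := by omega
      exact Dvd.dvd.mul_left (this ▸ dvd_rfl) P
  -- coprimality
  have hco : Nat.Coprime P p := by
    apply Nat.Coprime.prod_left
    intro i hi
    have hi' : i < j := Finset.mem_range.mp hi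
    refine (Nat.coprime_primes (Nat.prime_nth_prime i) hpprime).mpr ?_
    intro h
    have := Nat.nth_injective Nat.infinite_setOf_prime h
    omega
  -- the residue of the last prime
  set s := r ⟨j, hjk⟩ % p with hsdef
  have hs : s < p := Nat.mod_lt _ hppos
  -- splitting gammaj at level k
  have hsplit : ∀ n, gammaj k r k n
      = gammaj k r j n + (if n % p = s then 1 else 0) := by
    intro n
    unfold gammaj
    have hiff : ∀ i : Fin k,
        (((i : ℕ) < k ∧ n % Nat.nth Nat.Prime i = r i % Nat.nth Nat.Prime i) ↔
          (((i : ℕ) < j ∧ n % Nat.nth Nat.Prime i = r i % Nat.nth Nat.Prime i) ∨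
           ((i : ℕ) = j ∧ n % Nat.nth Nat.Prime i = r i % Nat.nth Nat.Prime i))) := by
      intro i
      have hik : (i : ℕ) < k := i.isLt
      constructor
      · rintro ⟨h1, h2⟩
        rcases lt_or_ge (i : ℕ) j with h | h
        · exact Or.inl ⟨h, h2⟩
        · exact Or.inr ⟨by omega, h2⟩
      · rintro (⟨h1, h2⟩ | ⟨h1, h2⟩) <;> exact ⟨hik, h2⟩
    have e0 : Finset.filter (fun i : Fin k =>
          (i : ℕ) < k ∧ n % Nat.nth Nat.Prime i = r i % Nat.nth Nat.Prime i)
          Finset.univ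
        = Finset.filter (fun i : Fin k =>
          ((i : ℕ) < j ∧ n % Nat.nth Nat.Prime i = r i % Nat.nth Nat.Prime i) ∨
          ((i : ℕ) = j ∧ n % Nat.nth Nat.Prime i = r i % Nat.nth Nat.Prime i))
          Finset.univ := Finset.filter_congr fun i _ => hiff i
    rw [e0, Finset.filter_or, Finset.card_union_of_disjoint]
    · congr 1
      have e1 : Finset.filter (fun i : Fin k =>
            (i : ℕ) = j ∧ n % Nat.nth Nat.Prime i = r i % Nat.nth Nat.Prime i)
            Finset.univ
          = if n % p = s then {(⟨j, hjk⟩ : Fin k)} else ∅ := by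
        ext i
        simp only [Finset.mem_filter, Finset.mem_univ, true_and]
        constructor
        · rintro ⟨h1, h2⟩
          have hij : i = (⟨j, hjk⟩ : Fin k) := Fin.ext h1
          subst hij
          have : n % p = s := h2
          rw [if_pos this]
          exact Finset.mem_singleton_self _
        · intro hi
          by_cases hc : n % p = s
          · rw [if_pos hc] at hi
            have hij : i = (⟨j, hjk⟩ : Fin k) := Finset.mem_singleton.mp hi
            subst hij
            exact ⟨rfl, hc⟩
          · rw [if_neg hc] at hi
            exact absurd hi (Finset.notMem_empty _)
      rw [e1]
      by_cases hc : n % p = s <;> simp [hc]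
    · exact Finset.disjoint_filter_filter' _ _ (by
        rw [disjoint_iff_inf_le]
        intro i hi
        simp only [Pi.inf_apply, inf_Prop_eq] at hi
        exact absurd hi.2.1 (by omega))
  -- decompose the predicate at level k
  have hpred : ∀ n, (2 ≤ gammaj k r k n) ↔
      (2 ≤ gammaj k r j n ∨ (gammaj k r j n = 1 ∧ n % p = s)) := by
    intro n
    rw [hsplit n]
    by_cases hc : n % p = s
    · rw [if_pos hc]
      constructor
      · intro h
        rcases Nat.lt_or_ge (gammaj k r j n) 2 with h2 | h2
        · exact Or.inr ⟨by omega, hc⟩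
        · exact Or.inl h2
      · rintro (h | ⟨h, _⟩) <;> omega
    · rw [if_neg hc]
      constructor
      · intro h; exact Or.inl (by omega)
      · rintro (h | ⟨h, hc'⟩)
        · omega
        · exact absurd hc' hc
  -- periodicity facts
  have hgP : ∀ n, gammaj k r j (n % P) = gammaj k r j n :=
    fun n => gammaj_mod k j r n P hdvdP
  have hgaddP : ∀ n, gammaj k r j (n + P) = gammaj k r j n :=
    fun n => gammaj_add k j r n P hdvdP
  have hg0 : gammaj k r j P = gammaj k r j 0 := by
    rw [← hgP P, Nat.mod_self]
  have hG0 : gammaj k r k (P * p) = gammaj k r k 0 := by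
    rw [← gammaj_mod k k r (P * p) (P * p) hdvdPp, Nat.mod_self]
  -- occCount at level k as a range count
  have hocck : occCount k r k
      = ((Finset.range (P * p)).filter fun n => 2 ≤ gammaj k r k n).card := by
    rw [occCount, hPk]
    exact cnt_Icc _ _ (by rw [hG0])
  -- split into two counts
  have hsplit2 : ((Finset.range (P * p)).filter fun n => 2 ≤ gammaj k r k n).card
      = ((Finset.range (P * p)).filter fun n => 2 ≤ gammaj k r j n).card
        + ((Finset.range (P * p)).filter
            fun n => gammaj k r j n = 1 ∧ n % p = s).card := by
    have e : ((Finset.range (P * p)).filter fun n => 2 ≤ gammaj k r k n)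
        = ((Finset.range (P * p)).filter
            fun n => 2 ≤ gammaj k r j n ∨ (gammaj k r j n = 1 ∧ n % p = s)) :=
      Finset.filter_congr fun n _ => hpred n
    rw [e, Finset.filter_or, Finset.card_union_of_disjoint]
    exact Finset.disjoint_filter_filter' _ _ (by
      rw [disjoint_iff_inf_le]
      intro n hn
      simp only [Pi.inf_apply, inf_Prop_eq] at hn
      omega)
  -- term A
  have hA : ((Finset.range (P * p)).filter fun n => 2 ≤ gammaj k r j n).card
      = p * ((Finset.range P).filter fun n => 2 ≤ gammaj k r j n).card := by
    rw [show P * p = p * P from Nat.mul_comm P p]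
    exact cnt_mul _ P p (fun n => by rw [hgaddP n])
  -- term B
  have hB : ((Finset.range (P * p)).filter
        fun n => gammaj k r j n = 1 ∧ n % p = s).card
      = ((Finset.range P).filter fun n => gammaj k r j n = 1).card :=
    crt_count (gammaj k r j) P p s hco hPpos hppos hs hgP
  -- occCount and freeCount at level j as range counts
  have hoccj : occCount k r j
      = ((Finset.range P).filter fun n => 2 ≤ gammaj k r j n).card := by
    rw [occCount, ← hPdef]
    exact cnt_Icc _ _ (by rw [hg0])
  have hfreej : freeCount k r j
      = ((Finset.range P).filter fun n => gammaj k r j n = 0).card := by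
    rw [freeCount, ← hPdef]
    exact cnt_Icc _ _ (by rw [hg0])
  -- partition of range P
  have hpart : ((Finset.range P).filter fun n => 2 ≤ gammaj k r j n).card
      + ((Finset.range P).filter fun n => gammaj k r j n = 1).card
      + ((Finset.range P).filter fun n => gammaj k r j n = 0).card = P := by
    have h1 := Finset.card_filter_add_card_filter_not
      (s := Finset.range P) (p := fun n => 2 ≤ gammaj k r j n)
    have h2 := Finset.card_filter_add_card_filter_not
      (s := (Finset.range P).filter fun n => ¬ 2 ≤ gammaj k r j n)
      (p := fun n => gammaj k r j n = 1)
    rw [Finset.filter_filter, Finset.filter_filter] at h2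
    have e1 : ((Finset.range P).filter
          fun n => ¬ 2 ≤ gammaj k r j n ∧ gammaj k r j n = 1)
        = (Finset.range P).filter fun n => gammaj k r j n = 1 := by
      apply Finset.filter_congr; intro n _; constructor
      · rintro ⟨_, h⟩; exact h
      · intro h; exact ⟨by omega, h⟩
    have e2 : ((Finset.range P).filter
          fun n => ¬ 2 ≤ gammaj k r j n ∧ ¬ gammaj k r j n = 1)
        = (Finset.range P).filter fun n => gammaj k r j n = 0 := by
      apply Finset.filter_congr; intro n _; constructor
      · rintro ⟨ha, hb⟩; omega
      · intro h; omega
    rw [e1, e2] at h2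
    rw [Finset.card_range] at h1
    omega
  -- final assembly
  have key : occCount k r k = p * occCount k r j
      + ((Finset.range P).filter fun n => gammaj k r j n = 1).card := by
    rw [hocck, hsplit2, hA, hB, hoccj]
  have hsum : occCount k r j
      + ((Finset.range P).filter fun n => gammaj k r j n = 1).card
      + freeCount k r j = P := by
    rw [hoccj, hfreej]; exact hpart
  -- cast to ℤ
  rw [key]
  push_cast
  have : ((((Finset.range P).filter fun n => gammaj k r j n = 1).card : ℤ))
      = (P : ℤ) - occCount k r j - freeCount k r j := by
    have h := hsum
    have : (((occCount k r j : ℤ))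
        + (((Finset.range P).filter fun n => gammaj k r j n = 1).card : ℤ)
        + (freeCount k r j : ℤ)) = (P : ℤ) := by exact_mod_cast congrArg Nat.cast h
    linarith
  rw [this]
  ring
end

section
/- Let p_{j_1}, ..., p_{j_k} be k pairwise distinct prime numbers with k ≥ 2, let P = ∏_{i=1}^k p_{j_i}, and choose for each i an arbitrary residue class r_i modulo p_{j_i}. Then the number of integers n with 1 ≤ n ≤ P satisfying γ(n) ≤ 1 equals A_k(p_{j_1}, ..., p_{j_k}), the determinant of the k×k integer matrix whose (i,i) entry is p_{j_i} and whose every off-diagonal entry is 1. -/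
open Finset Matrix



lemma det_aux (k : ℕ) (q : Fin k → ℚ) (hq : ∀ i, q i ≠ 1) :
    (Matrix.of fun i j : Fin k => if i = j then q i else 1).det
      = ∏ i, (q i - 1) + ∑ i, ∏ j ∈ Finset.univ.erase i, (q j - 1) := by
  set d : Fin k → ℚ := fun i => q i - 1 with hd_def
  have hd : ∀ i, d i ≠ 0 := fun i => sub_ne_zero.mpr (hq i)
  have key : (Matrix.of fun i j : Fin k => if i = j then q i else 1)
      = Matrix.diagonal d *
        (1 + HMul.hMul (self := Matrix.instHMulOfFintypeOfMulOfAddCommMonoid) (Matrix.replicateCol Unit (fun i => (d i)⁻¹)) (Matrix.replicateRow Unit (1 : Fin k → ℚ))) := by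
    ext i j
    rw [Matrix.diagonal_mul]
    by_cases h : i = j
    · subst h
      simp [Matrix.add_apply, Matrix.one_apply, Matrix.mul_apply, Matrix.replicateCol, Matrix.replicateRow,
        mul_add, mul_inv_cancel₀ (hd i), hd_def, mul_inv_cancel₀ (sub_ne_zero.mpr (hq i))]
    · simp [Matrix.add_apply, Matrix.one_apply, Matrix.mul_apply, Matrix.replicateCol, Matrix.replicateRow, h,
        mul_inv_cancel₀ (hd i)]
  rw [key, Matrix.det_mul, Matrix.det_diagonal, Matrix.det_one_add_replicateCol_mul_replicateRow]
  have hdot : (1 : Fin k → ℚ) ⬝ᵥ (fun i => (d i)⁻¹) = ∑ i, (d i)⁻¹ := by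
    simp [dotProduct]
  rw [hdot, mul_add, mul_one, Finset.mul_sum]
  congr 1
  refine Finset.sum_congr rfl fun i _ => ?_
  rw [← Finset.mul_prod_erase univ d (mem_univ i), mul_comm (d i), mul_assoc,
    mul_inv_cancel₀ (hd i), mul_one]


lemma count_pi (k : ℕ) (p : Fin k → ℕ) [∀ i, NeZero (p i)] (r : Fin k → ℕ) :
    ((Finset.univ.filter fun f : ∀ i, ZMod (p i) =>
        (Finset.univ.filter fun i => f i = (r i : ZMod (p i))).card ≤ 1).card)
      = ∏ i, (p i - 1) + ∑ i, ∏ j ∈ Finset.univ.erase i, (p j - 1) := by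
  classical
  have hsplit : (Finset.univ.filter fun f : ∀ i, ZMod (p i) =>
        (Finset.univ.filter fun i => f i = (r i : ZMod (p i))).card ≤ 1)
      = (Finset.univ.filter fun f : ∀ i, ZMod (p i) =>
          (Finset.univ.filter fun i => f i = (r i : ZMod (p i))) = ∅)
        ∪ (Finset.univ.filter fun f : ∀ i, ZMod (p i) =>
          (Finset.univ.filter fun i => f i = (r i : ZMod (p i))).card = 1) := by
    rw [← Finset.filter_or]
    refine Finset.filter_congr fun f _ => ?_
    rw [← Finset.card_eq_zero]
    omega
  have hdisj : Disjoint
      (Finset.univ.filter fun f : ∀ i, ZMod (p i) =>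
          (Finset.univ.filter fun i => f i = (r i : ZMod (p i))) = ∅)
      (Finset.univ.filter fun f : ∀ i, ZMod (p i) =>
          (Finset.univ.filter fun i => f i = (r i : ZMod (p i))).card = 1) := by
    refine Finset.disjoint_left.mpr fun f hf1 hf2 => ?_
    have h1 := (Finset.mem_filter.mp hf1).2
    have h2 := (Finset.mem_filter.mp hf2).2
    rw [h1, Finset.card_empty] at h2
    exact absurd h2 (by norm_num)
  rw [hsplit, Finset.card_union_of_disjoint hdisj]
  congr 1
  · -- zero matches
    have : (Finset.univ.filter fun f : ∀ i, ZMod (p i) =>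
          (Finset.univ.filter fun i => f i = (r i : ZMod (p i))) = ∅)
        = Fintype.piFinset fun i => ({(r i : ZMod (p i))}ᶜ : Finset (ZMod (p i))) := by
      ext f
      simp [Fintype.mem_piFinset, Finset.filter_eq_empty_iff]
    rw [this, Fintype.card_piFinset]
    refine Finset.prod_congr rfl fun i _ => ?_
    rw [Finset.card_compl, Finset.card_singleton, ZMod.card]
  · -- one match
    have : (Finset.univ.filter fun f : ∀ i, ZMod (p i) =>
          (Finset.univ.filter fun i => f i = (r i : ZMod (p i))).card = 1)
        = Finset.univ.biUnion fun a : Fin k => Fintype.piFinset fun j =>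
            if j = a then {(r j : ZMod (p j))} else ({(r j : ZMod (p j))}ᶜ : Finset (ZMod (p j))) := by
      ext f
      simp only [Finset.mem_filter, Finset.mem_univ, true_and, Finset.mem_biUnion,
        Fintype.mem_piFinset, Finset.card_eq_one]
      constructor
      · rintro ⟨a, ha⟩
        have hj : ∀ j, f j = (r j : ZMod (p j)) ↔ j = a := by
          intro j
          constructor
          · intro h
            have hm : j ∈ Finset.univ.filter (fun i => f i = (r i : ZMod (p i))) :=
              Finset.mem_filter.mpr ⟨Finset.mem_univ _, h⟩
            rw [ha, Finset.mem_singleton] at hm; exact hm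
          · rintro rfl
            have hm : j ∈ Finset.univ.filter (fun i => f i = (r i : ZMod (p i))) := by
              rw [ha]; exact Finset.mem_singleton_self j
            exact (Finset.mem_filter.mp hm).2
        refine ⟨a, fun j => ?_⟩
        by_cases h : j = a
        · subst h; simp [(hj j).mpr rfl]
        · simp only [if_neg h, Finset.mem_compl, Finset.mem_singleton]
          exact fun hc => h ((hj j).mp hc)
      · rintro ⟨a, ha⟩
        refine ⟨a, ?_⟩
        ext j
        simp only [Finset.mem_filter, Finset.mem_univ, true_and, Finset.mem_singleton]
        have := ha j
        by_cases h : j = a <;> simp [h] at this ⊢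
        · exact this
        · intro hc; exact absurd hc (by simpa using this)
    rw [this, Finset.card_biUnion]
    · refine Finset.sum_congr rfl fun a _ => ?_
      rw [Fintype.card_piFinset, ← Finset.mul_prod_erase Finset.univ _ (Finset.mem_univ a)]
      rw [if_pos rfl, Finset.card_singleton, one_mul]
      refine Finset.prod_congr rfl fun j hj => ?_
      rw [if_neg (Finset.ne_of_mem_erase hj), Finset.card_compl, Finset.card_singleton, ZMod.card]
    · intro a _ b _ hab
      refine Finset.disjoint_left.mpr fun f hfa hfb => ?_
      rw [Fintype.mem_piFinset] at hfa hfb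
      have h1 := hfa a; have h2 := hfb a
      rw [if_pos rfl] at h1
      rw [if_neg hab] at h2
      exact absurd (Finset.mem_singleton.mp h1) (by simpa using h2)

/-- For `k ≥ 2` pairwise distinct primes `p 0, …, p (k-1)` and an arbitrary choice of
residue classes `r i` modulo `p i`, the number of integers `1 ≤ n ≤ ∏ pᵢ` lying in at most
one of the residue classes equals the determinant of the `k × k` integer matrix with the
primes on the diagonal and ones elsewhere. -/
theorem general_count_available_eq_det (k : ℕ) (hk : 2 ≤ k) (p : Fin k → ℕ)
    (hp : ∀ i, (p i).Prime) (hinj : Function.Injective p) (r : Fin k → ℕ) :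
    (((Finset.Icc 1 (∏ i : Fin k, p i)).filter fun n =>
        (Finset.univ.filter fun i : Fin k => n % p i = r i % p i).card ≤ 1).card : ℤ) =
      (Matrix.of fun i j : Fin k => if i = j then (p i : ℤ) else 1).det := by
  classical
  haveI : ∀ i, NeZero (p i) := fun i => ⟨(hp i).pos.ne'⟩
  set P := ∏ i : Fin k, p i with hP_def
  have hP1 : 1 ≤ P := Finset.one_le_prod' fun i _ => (hp i).pos
  -- the basic congruence translation
  have hcong : ∀ (n : ℕ) (i : Fin k), (n % p i = r i % p i) ↔ ((n : ZMod (p i)) = (r i : ZMod (p i))) :=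
    fun n i => (ZMod.natCast_eq_natCast_iff n (r i) (p i)).symm
  set g : ℕ → ∀ i, ZMod (p i) := fun n => fun i => (n : ZMod (p i)) with hg_def
  have hginj : ∀ a b, a ∈ Finset.Icc 1 P → b ∈ Finset.Icc 1 P → g a = g b → a = b := by
    have key : ∀ a b, a ∈ Finset.Icc 1 P → b ∈ Finset.Icc 1 P → a ≤ b → g a = g b → a = b := by
      intro a b ha hb hab h
      rw [Finset.mem_Icc] at ha hb
      have hdvd : ∀ i, p i ∣ b - a := by
        intro i
        refine (Nat.modEq_iff_dvd' hab).mp ?_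
        have := congrFun h i
        exact ((ZMod.natCast_eq_natCast_iff a b (p i)).mp this)
      have hPdvd : P ∣ b - a := by
        have himg : P = ∏ q ∈ Finset.univ.image p, q := by
          rw [Finset.prod_image (fun i _ j _ h => hinj h)]
        rw [himg]
        refine Finset.prod_primes_dvd _ (fun q hq => ?_) (fun q hq => ?_)
        · obtain ⟨i, _, rfl⟩ := Finset.mem_image.mp hq
          exact (hp i).prime
        · obtain ⟨i, _, rfl⟩ := Finset.mem_image.mp hq
          exact hdvd i
      rcases Nat.eq_zero_or_pos (b - a) with h0 | h0
      · omega
      · have := Nat.le_of_dvd h0 hPdvd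
        omega
    intro a b ha hb h
    rcases le_total a b with hab | hab
    · exact key a b ha hb hab h
    · exact (key b a hb ha hab h.symm).symm
  have hcards : Fintype.card (∀ i, ZMod (p i)) = P := by
    rw [Fintype.card_pi]
    exact Finset.prod_congr rfl fun i _ => ZMod.card (p i)
  have himg : (Finset.Icc 1 P).image g = Finset.univ := by
    refine Finset.eq_univ_of_card _ ?_
    rw [Finset.card_image_of_injOn (fun a ha b hb => hginj a b ha hb), Nat.card_Icc, hcards]
    omega
  have hbij : ((Finset.Icc 1 P).filter fun n =>
        (Finset.univ.filter fun i : Fin k => n % p i = r i % p i).card ≤ 1).card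
      = ((Finset.univ : Finset (∀ i, ZMod (p i))).filter fun f =>
        (Finset.univ.filter fun i => f i = (r i : ZMod (p i))).card ≤ 1).card := by
    refine Finset.card_bij (fun n _ => g n) ?_ ?_ ?_
    · intro n hn
      rw [Finset.mem_filter] at hn ⊢
      refine ⟨Finset.mem_univ _, ?_⟩
      have : (Finset.univ.filter fun i : Fin k => n % p i = r i % p i)
          = (Finset.univ.filter fun i => g n i = (r i : ZMod (p i))) := by
        refine Finset.filter_congr fun i _ => ?_
        exact_mod_cast (hcong n i)
      rw [← this]; exact hn.2
    · intro a ha b hb h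
      exact hginj a b (Finset.mem_filter.mp ha).1 (Finset.mem_filter.mp hb).1 h
    · intro f hf
      have : f ∈ (Finset.Icc 1 P).image g := by rw [himg]; exact Finset.mem_univ f
      obtain ⟨n, hn, rfl⟩ := Finset.mem_image.mp this
      refine ⟨n, Finset.mem_filter.mpr ⟨hn, ?_⟩, rfl⟩
      have heq : (Finset.univ.filter fun i : Fin k => n % p i = r i % p i)
          = (Finset.univ.filter fun i => g n i = (r i : ZMod (p i))) := by
        refine Finset.filter_congr fun i _ => ?_
        exact_mod_cast (hcong n i)
      rw [heq]
      exact (Finset.mem_filter.mp hf).2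
  rw [hbij, count_pi k p r]
  -- now cast and use det_aux
  apply Int.cast_injective (α := ℚ)
  push_cast
  have hmap : ((Matrix.of fun i j : Fin k => if i = j then (p i : ℤ) else 1).det : ℚ)
      = (Matrix.of fun i j : Fin k => if i = j then (p i : ℚ) else 1).det := by
    rw [show ((Matrix.of fun i j : Fin k => if i = j then (p i : ℤ) else 1).det : ℚ)
        = (Int.castRingHom ℚ) (Matrix.of fun i j : Fin k => if i = j then (p i : ℤ) else 1).det from rfl,
      RingHom.map_det]
    congr 1
    ext i j
    simp [RingHom.mapMatrix_apply, Matrix.map_apply, apply_ite (Int.cast : ℤ → ℚ)]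
  rw [show ((Matrix.of fun i j : Fin k => if i = j then (p i : ℤ) else 1).map fun x => (x : ℚ)).det = ((Matrix.of fun i j : Fin k => if i = j then (p i : ℤ) else 1).det : ℚ) from (RingHom.map_det (Int.castRingHom ℚ) _).symm]
  rw [hmap, det_aux k (fun i => (p i : ℚ))
    (fun i => by show ((p i : ℚ)) ≠ 1; exact_mod_cast (hp i).one_lt.ne')]
  have hterm : ∀ j : Fin k, ((p j - 1 : ℕ) : ℚ) = (p j : ℚ) - 1 := fun j => by
    rw [Nat.cast_sub (hp j).one_lt.le]; simp
  congr 1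
  · exact Finset.prod_congr rfl fun j _ => hterm j
  · exact Finset.sum_congr rfl fun i _ => Finset.prod_congr rfl fun j _ => hterm j
end
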